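/- Let R_ν(x) = -2x (∫_{x}^{-ν} F̃_ν(u) du) / (2 q_ν(x) (x+ν)²) for x < -ν, where q_ν(x) = (-(x+ν))^{ν/2-1}e^{-(x+ν)/2}/(2^{ν/2}Γ(ν/2)) and F̃_ν(x) = ∫_x^{-ν} q_ν(u) du. Then lim_{x → -ν⁻} R_ν(x) = 4/(2+ν) and lim_{x → -∞} R_ν(x) = 0; consequently R_ν is bounded on (-∞, -ν). -/

import Mathlib

open MeasureTheory Real intervalIntegral Filter Topology

/-- Auxiliary (non-probability) density used on `(-∞, -ν)`. -/
noncomputable def qnu (ν : ℝ) (x : ℝ) : ℝ :=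
  if x < -ν then (-(x + ν)) ^ (ν / 2 - 1) * Real.exp (-(x + ν) / 2) /
    (2 ^ (ν / 2) * Real.Gamma (ν / 2)) else 0

/-- `F̃_ν(x) = ∫_x^{-ν} q_ν(u) du`. -/
noncomputable def Ftilnu (ν : ℝ) (x : ℝ) : ℝ := ∫ u in x..(-ν), qnu ν u

/-- The function `R_ν` controlling the derivative of the Stein solution on `(-∞,-ν)`. -/
noncomputable def Rnu (ν : ℝ) (x : ℝ) : ℝ :=
  -2 * x * (∫ u in x..(-ν), Ftilnu ν u) / (2 * qnu ν x * (x + ν) ^ 2)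

/-!
Put `p = ν / 2`, `t = -(x + ν)`, `g(t) = t ^ (p - 1) e ^ {t / 2}` and `G_p(t) = ∫_0^t g`, so that
`G_{p+1}(t) = ∫_0^t w g(w) dw`. Up to the constant `2 ^ p Γ(p)`, `q_ν`, `F̃_ν` and `∫_x^{-ν} F̃_ν`
become `g(t)`, `G_p(t)` and, integrating by parts, `t G_p(t) - G_{p+1}(t)`. Since
`2 w ^ p e ^ {w / 2}` is a primitive of `2 p g + w g`, we have `ν G_p + G_{p+1} = 2 t g(t)`, hence
`R_ν = (ν + t) (2 - (ν + t) G_{p+1} / (t² g)) / ν = ((ν + t) / t)² G_p / g - 2 (ν + t) / t`.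
As `t → 0⁺`, `G_{p+1} / (t² g)` is squeezed between `e ^ {-t/2} / (p + 1)` and `1 / (p + 1)`; as
`t → ∞`, `G_p / g → 2` because the logarithmic derivative of `g` tends to `1 / 2`. The first form
also gives `0 ≤ R_ν(x) ≤ -2x / ν`, which together with the limit at `-∞` bounds `R_ν`.
-/

open Set

/-- With `p = ν / 2` and `t = -(x + ν)`, `qnu ν x = reflDensity p t / (2 ^ p * Γ(p))`. -/
noncomputable def reflDensity (p t : ℝ) : ℝ := t ^ (p - 1) * exp (t / 2)

noncomputable def reflPrimitive (p t : ℝ) : ℝ := ∫ w in (0 : ℝ)..t, reflDensity p w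

section reflDensity

variable {p t : ℝ}

lemma reflDensity_pos (ht : 0 < t) : 0 < reflDensity p t := by
  unfold reflDensity; positivity

lemma reflDensity_nonneg (ht : 0 ≤ t) : 0 ≤ reflDensity p t := by
  unfold reflDensity; positivity

lemma reflDensity_add_one (p t : ℝ) : reflDensity (p + 1) t = t ^ p * exp (t / 2) := by
  rw [reflDensity, add_sub_cancel_right]

lemma mul_reflDensity (ht : 0 < t) : t * reflDensity p t = reflDensity (p + 1) t := by
  rw [reflDensity_add_one]
  unfold reflDensity
  rw [← mul_assoc, mul_comm t, ← rpow_add_one ht.ne', sub_add_cancel]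

lemma continuousAt_reflDensity (ht : 0 < t) : ContinuousAt (reflDensity p) t :=
  (continuousAt_rpow_const _ _ (Or.inl ht.ne')).mul (by fun_prop)

lemma hasDerivAt_reflDensity (ht : 0 < t) :
    HasDerivAt (reflDensity p) (((p - 1) / t + 1 / 2) * reflDensity p t) t := by
  have hexp : HasDerivAt (fun w => exp (w / 2)) (exp (t / 2) * (1 / 2)) t :=
    ((hasDerivAt_id t).div_const 2).exp.congr_deriv (by simp)
  refine ((hasDerivAt_rpow_const (p := p - 1) (Or.inl ht.ne')).mul hexp).congr_deriv ?_
  unfold reflDensity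
  rw [rpow_sub_one ht.ne']
  field_simp

lemma intervalIntegrable_reflDensity (hp : 0 < p) (a b : ℝ) :
    IntervalIntegrable (reflDensity p) volume a b :=
  (intervalIntegrable_rpow' (by linarith)).mul_continuousOn (by fun_prop)

lemma hasDerivAt_reflPrimitive (hp : 0 < p) (ht : 0 < t) :
    HasDerivAt (reflPrimitive p) (reflDensity p t) t :=
  integral_hasDerivAt_right (intervalIntegrable_reflDensity hp 0 t)
    (ContinuousAt.stronglyMeasurableAtFilter isOpen_Ioi (fun _ ↦ continuousAt_reflDensity) t ht)
    (continuousAt_reflDensity ht)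

lemma continuous_reflPrimitive (hp : 0 < p) : Continuous (reflPrimitive p) :=
  continuous_primitive (intervalIntegrable_reflDensity hp) 0

end reflDensity

section reflPrimitive

variable {p t : ℝ}

lemma integral_rpow_sub_one (hp : 0 < p) (t : ℝ) : ∫ w in (0 : ℝ)..t, w ^ (p - 1) = t ^ p / p := by
  rw [integral_rpow (Or.inl (by linarith)), sub_add_cancel, zero_rpow hp.ne', sub_zero]

lemma rpow_div_le_reflPrimitive (hp : 0 < p) (ht : 0 ≤ t) : t ^ p / p ≤ reflPrimitive p t := by
  rw [← integral_rpow_sub_one hp]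
  refine integral_mono_on ht (intervalIntegrable_rpow' (by linarith))
    (intervalIntegrable_reflDensity hp 0 t) fun w hw ↦ ?_
  exact le_mul_of_one_le_right (rpow_nonneg hw.1 _) (one_le_exp (by linarith [hw.1]))

lemma reflPrimitive_le (hp : 0 < p) (ht : 0 ≤ t) : reflPrimitive p t ≤ t ^ p * exp (t / 2) / p :=
  calc reflPrimitive p t ≤ ∫ w in (0 : ℝ)..t, w ^ (p - 1) * exp (t / 2) := by
        refine integral_mono_on ht (intervalIntegrable_reflDensity hp 0 t)
          ((intervalIntegrable_rpow' (by linarith)).mul_const _) fun w hw ↦ ?_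
        exact mul_le_mul_of_nonneg_left (exp_le_exp.2 (by linarith [hw.2])) (rpow_nonneg hw.1 _)
    _ = t ^ p * exp (t / 2) / p := by
        rw [intervalIntegral.integral_mul_const, integral_rpow_sub_one hp]; ring

lemma reflPrimitive_add_one_le (hp : 0 < p) (ht : 0 ≤ t) :
    reflPrimitive (p + 1) t ≤ t * reflPrimitive p t := by
  rw [reflPrimitive, reflPrimitive, ← intervalIntegral.integral_const_mul]
  refine integral_mono_on_of_le_Ioo ht (intervalIntegrable_reflDensity (by linarith) 0 t)
    ((intervalIntegrable_reflDensity hp 0 t).const_mul t) fun w hw ↦ ?_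
  rw [← mul_reflDensity hw.1]
  exact mul_le_mul_of_nonneg_right hw.2.le (reflDensity_nonneg hw.1.le)

/-- `2 w ^ p e ^ {w / 2}` is a primitive of `2 p w ^ (p - 1) e ^ {w / 2} + w ^ p e ^ {w / 2}`. -/
lemma two_mul_reflPrimitive_add (hp : 0 < p) (ht : 0 < t) :
    2 * p * reflPrimitive p t + reflPrimitive (p + 1) t = 2 * (t * reflDensity p t) := by
  have hderiv : ∀ w ∈ Ioo 0 t, HasDerivAt (fun w ↦ 2 * w ^ p * exp (w / 2))
      (2 * p * reflDensity p w + reflDensity (p + 1) w) w := by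
    intro w hw
    have hpow := (hasDerivAt_rpow_const (p := p) (Or.inl hw.1.ne')).const_mul 2
    have hexp : HasDerivAt (fun w ↦ exp (w / 2)) (exp (w / 2) * (1 / 2)) w :=
      ((hasDerivAt_id w).div_const 2).exp.congr_deriv (by simp)
    refine (hpow.mul hexp).congr_deriv ?_
    rw [reflDensity_add_one, reflDensity]
    ring
  have hcont : ContinuousOn (fun w ↦ 2 * w ^ p * exp (w / 2)) (Icc 0 t) :=
    ((continuous_const.mul (continuous_rpow_const hp.le)).mul (by fun_prop)).continuousOn
  have hg := (intervalIntegrable_reflDensity hp 0 t).const_mul (2 * p)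
  have hg₁ := intervalIntegrable_reflDensity (p := p + 1) (by linarith) 0 t
  have := integral_eq_sub_of_hasDerivAt_of_le ht.le hcont hderiv (hg.add hg₁)
  rw [integral_add hg hg₁, intervalIntegral.integral_const_mul, zero_rpow hp.ne'] at this
  rw [mul_reflDensity ht, reflDensity_add_one, ← mul_assoc]
  simpa [reflPrimitive] using this

lemma integral_reflPrimitive (hp : 0 < p) (ht : 0 ≤ t) :
    ∫ w in (0 : ℝ)..t, reflPrimitive p w = t * reflPrimitive p t - reflPrimitive (p + 1) t := by
  have hderiv : ∀ w ∈ Ioo 0 t, HasDerivAt (fun w ↦ w * reflPrimitive p w)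
      (reflPrimitive p w + reflDensity (p + 1) w) w := by
    intro w hw
    refine ((hasDerivAt_id w).mul (hasDerivAt_reflPrimitive hp hw.1)).congr_deriv ?_
    rw [← mul_reflDensity hw.1, id, one_mul]
  have hG := (continuous_reflPrimitive hp).intervalIntegrable (μ := volume) 0 t
  have hg := intervalIntegrable_reflDensity (p := p + 1) (by linarith) 0 t
  have := integral_eq_sub_of_hasDerivAt_of_le (f := fun w ↦ w * reflPrimitive p w) ht
    (continuous_id.mul (continuous_reflPrimitive hp)).continuousOn hderiv (hG.add hg)
  rw [integral_add hG hg, zero_mul, sub_zero] at this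
  exact eq_sub_of_add_eq this

end reflPrimitive

section asymptotics

variable {p t : ℝ}

lemma tendsto_reflPrimitive_div_nhdsGT (hp : 0 < p) :
    Tendsto (fun t ↦ reflPrimitive p t / (t * reflDensity p t)) (𝓝[>] 0) (𝓝 (1 / p)) := by
  have hlow : Tendsto (fun t : ℝ ↦ exp (-(t / 2)) / p) (𝓝[>] 0) (𝓝 (1 / p)) := by
    have : Continuous (fun t : ℝ ↦ exp (-(t / 2)) / p) := by fun_prop
    simpa using (this.tendsto 0).mono_left nhdsWithin_le_nhds
  refine tendsto_of_tendsto_of_tendsto_of_le_of_le' hlow tendsto_const_nhds ?_ ?_ <;>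
    filter_upwards [self_mem_nhdsWithin] with t (ht : 0 < t) <;>
    rw [mul_reflDensity ht, reflDensity_add_one]
  · rw [le_div_iff₀ (by positivity)]
    calc exp (-(t / 2)) / p * (t ^ p * exp (t / 2)) = t ^ p / p := by
          rw [exp_neg]; field_simp
      _ ≤ reflPrimitive p t := rpow_div_le_reflPrimitive hp ht.le
  · rw [div_le_iff₀ (by positivity)]
    calc reflPrimitive p t ≤ t ^ p * exp (t / 2) / p := reflPrimitive_le hp ht.le
      _ = 1 / p * (t ^ p * exp (t / 2)) := by ring

lemma two_mul_reflDensity_le (hp : 0 < p) (ht : 0 < t) :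
    2 * t * reflDensity p t ≤ (2 * p + t) * reflPrimitive p t := by
  linarith [two_mul_reflPrimitive_add hp ht, reflPrimitive_add_one_le hp ht.le]

/-- On `[t / 2, t]` the logarithmic derivative `(p - 1) / w + 1 / 2` of `reflDensity p` is at
least `1 / 2 - 2 |p - 1| / t`. -/
lemma integral_half_reflDensity_le (ht : 0 < t) :
    (1 / 2 - 2 * |p - 1| / t) * ∫ w in t / 2..t, reflDensity p w ≤ reflDensity p t := by
  have hpos : ∀ w ∈ Icc (t / 2) t, 0 < w := fun w hw ↦ by linarith [hw.1]
  have hcont : ContinuousOn (reflDensity p) (Icc (t / 2) t) := fun w hw ↦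
    (continuousAt_reflDensity (hpos w hw)).continuousWithinAt
  rw [← intervalIntegral.integral_const_mul]
  calc ∫ w in t / 2..t, (1 / 2 - 2 * |p - 1| / t) * reflDensity p w
      ≤ reflDensity p t - reflDensity p (t / 2) := by
        refine integral_le_sub_of_hasDeriv_right_of_le (by linarith) hcont
          (fun w hw ↦ (hasDerivAt_reflDensity (hpos w (Ioo_subset_Icc_self hw))).hasDerivWithinAt)
          (hcont.integrableOn_Icc.const_mul _) fun w hw ↦ ?_
        have hw0 : 0 < w := hpos w (Ioo_subset_Icc_self hw)
        refine mul_le_mul_of_nonneg_right ?_ (reflDensity_nonneg hw0.le)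
        have h1 : |p - 1| / w ≤ 2 * |p - 1| / t :=
          calc |p - 1| / w ≤ |p - 1| / (t / 2) :=
                div_le_div_of_nonneg_left (abs_nonneg _) (by linarith) hw.1.le
            _ = 2 * |p - 1| / t := by field_simp
        have h2 : -(|p - 1| / w) ≤ (p - 1) / w := by
          rw [← neg_div]; exact div_le_div_of_nonneg_right (neg_abs_le _) hw0.le
        linarith
    _ ≤ reflDensity p t := sub_le_self _ (reflDensity_nonneg (by linarith))

lemma reflPrimitive_div_reflDensity_le (hp : 0 < p) (ht : 4 * |p - 1| < t) :
    reflPrimitive p t / reflDensity p t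
      ≤ t * exp (-(t / 4)) / (2 ^ p * p) + (1 / 2 - 2 * |p - 1| / t)⁻¹ := by
  have ht0 : 0 < t := by linarith [abs_nonneg (p - 1)]
  have hc : 0 < 1 / 2 - 2 * |p - 1| / t := by
    rw [sub_pos, div_lt_iff₀ ht0]; linarith
  have hg := reflDensity_pos (p := p) ht0
  have hsplit : reflPrimitive p t = reflPrimitive p (t / 2) + ∫ w in t / 2..t, reflDensity p w :=
    (integral_add_adjacent_intervals (intervalIntegrable_reflDensity hp 0 (t / 2))
      (intervalIntegrable_reflDensity hp (t / 2) t)).symm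
  have hhead : reflPrimitive p (t / 2) / reflDensity p t ≤ t * exp (-(t / 4)) / (2 ^ p * p) :=
    calc reflPrimitive p (t / 2) / reflDensity p t
        ≤ (t / 2) ^ p * exp (t / 2 / 2) / p / reflDensity p t := by
          gcongr; exact reflPrimitive_le hp (by linarith)
      _ = t * exp (-(t / 4)) / (2 ^ p * p) := by
          have he : exp (t / 2) = exp (t / 4) * exp (t / 4) := by rw [← exp_add]; ring_nf
          rw [div_rpow ht0.le zero_le_two, reflDensity, rpow_sub_one ht0.ne', he, exp_neg,
            show t / 2 / 2 = t / 4 by ring]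
          field_simp
  have htail : (∫ w in t / 2..t, reflDensity p w) / reflDensity p t
      ≤ (1 / 2 - 2 * |p - 1| / t)⁻¹ := by
    rw [div_le_iff₀ hg, inv_mul_eq_div, le_div_iff₀ hc, mul_comm]
    exact integral_half_reflDensity_le ht0
  rw [hsplit, add_div]
  exact add_le_add hhead htail

lemma tendsto_reflPrimitive_div_reflDensity_atTop (hp : 0 < p) :
    Tendsto (fun t ↦ reflPrimitive p t / reflDensity p t) atTop (𝓝 2) := by
  have hlow : Tendsto (fun t ↦ 2 - 4 * p / (2 * p + t)) atTop (𝓝 2) := by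
    simpa using (tendsto_const_nhds (x := (2 : ℝ))).sub ((tendsto_const_nhds (x := 4 * p)).div_atTop
      (tendsto_atTop_add_const_left _ (2 * p) tendsto_id))
  have hup : Tendsto (fun t ↦ t * exp (-(t / 4)) / (2 ^ p * p) + (1 / 2 - 2 * |p - 1| / t)⁻¹)
      atTop (𝓝 2) := by
    have hexp : Tendsto (fun t : ℝ ↦ t * exp (-(t / 4))) atTop (𝓝 0) := by
      convert tendsto_rpow_mul_exp_neg_mul_atTop_nhds_zero 1 (1 / 4) (by norm_num) using 2
      rw [rpow_one]; ring_nf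
    have hinv : Tendsto (fun t ↦ (1 / 2 - 2 * |p - 1| / t)⁻¹) atTop (𝓝 2) := by
      have := ((tendsto_const_nhds (x := (1 / 2 : ℝ))).sub
        ((tendsto_const_nhds (x := 2 * |p - 1|)).div_atTop tendsto_id)).inv₀
        (by norm_num : (1 / 2 - 0 : ℝ) ≠ 0)
      simpa using this
    simpa using (hexp.div_const _).add hinv
  refine tendsto_of_tendsto_of_tendsto_of_le_of_le' hlow hup ?_ ?_
  · filter_upwards [eventually_gt_atTop 0] with t ht
    rw [show 2 - 4 * p / (2 * p + t) = 2 * t / (2 * p + t) by field_simp; ring,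
      div_le_div_iff₀ (by positivity) (reflDensity_pos ht)]
    linarith [two_mul_reflDensity_le hp ht]
  · filter_upwards [eventually_gt_atTop (4 * |p - 1|)] with t ht
    exact reflPrimitive_div_reflDensity_le hp ht

end asymptotics

lemma Filter.Tendsto.of_comp_sub_nhdsGT {f : ℝ → ℝ} {a : ℝ} {l : Filter ℝ}
    (h : Tendsto (fun t ↦ f (a - t)) (𝓝[>] 0) l) : Tendsto f (𝓝[<] a) l := by
  have hsub : Tendsto (fun x ↦ a - x) (𝓝[<] a) (𝓝[>] 0) :=
    tendsto_nhdsWithin_of_tendsto_nhds_of_eventually_within _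
      (by simpa using ((continuous_sub_left a).tendsto a).mono_left nhdsWithin_le_nhds)
      (eventually_nhdsWithin_of_forall fun _ hx ↦ mem_Ioi.2 (sub_pos.2 hx))
  simpa [Function.comp_def] using h.comp hsub

lemma Filter.Tendsto.of_comp_sub_atTop {f : ℝ → ℝ} {a : ℝ} {l : Filter ℝ}
    (h : Tendsto (fun t ↦ f (a - t)) atTop l) : Tendsto f atBot l := by
  have hsub : Tendsto (fun x ↦ a - x) atBot atTop := by
    simpa [sub_eq_add_neg] using tendsto_atTop_add_const_left atBot a tendsto_neg_atBot_atTop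
  simpa [Function.comp_def] using h.comp hsub

section Rnu

variable {ν t : ℝ}

lemma qnu_neg_sub (ht : 0 < t) :
    qnu ν (-ν - t) = reflDensity (ν / 2) t / (2 ^ (ν / 2) * Gamma (ν / 2)) := by
  rw [qnu, if_pos (by linarith), show -(-ν - t + ν) = t by ring, reflDensity]

lemma Ftilnu_neg_sub (ht : 0 ≤ t) :
    Ftilnu ν (-ν - t) = reflPrimitive (ν / 2) t / (2 ^ (ν / 2) * Gamma (ν / 2)) := by
  have hsub := integral_comp_sub_left (qnu ν) (-ν) (a := 0) (b := t)
  rw [sub_zero] at hsub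
  rw [Ftilnu, ← hsub, reflPrimitive, ← intervalIntegral.integral_div]
  refine integral_congr_ae (Eventually.of_forall fun w hw ↦ ?_)
  rw [uIoc_of_le ht] at hw
  exact qnu_neg_sub hw.1

lemma Rnu_neg_sub (hν : 0 < ν) (ht : 0 < t) :
    Rnu ν (-ν - t) = (ν + t) * (t * reflPrimitive (ν / 2) t - reflPrimitive (ν / 2 + 1) t)
      / (t ^ 2 * reflDensity (ν / 2) t) := by
  have hC : 0 < 2 ^ (ν / 2) * Gamma (ν / 2) :=
    mul_pos (rpow_pos_of_pos two_pos _) (Gamma_pos_of_pos (by linarith))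
  have hint : ∫ u in -ν - t..-ν, Ftilnu ν u
      = (t * reflPrimitive (ν / 2) t - reflPrimitive (ν / 2 + 1) t)
        / (2 ^ (ν / 2) * Gamma (ν / 2)) := by
    have hsub := integral_comp_sub_left (Ftilnu ν) (-ν) (a := 0) (b := t)
    rw [sub_zero] at hsub
    rw [← hsub, ← integral_reflPrimitive (by linarith) ht.le, ← intervalIntegral.integral_div]
    refine integral_congr fun w hw ↦ ?_
    rw [uIcc_of_le ht.le] at hw
    exact Ftilnu_neg_sub hw.1
  have hg := reflDensity_pos (p := ν / 2) ht
  rw [Rnu, hint, qnu_neg_sub ht, show -ν - t + ν = -t by ring]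
  field_simp
  ring

lemma Rnu_neg_sub_eq_nhdsGT (hν : 0 < ν) (ht : 0 < t) :
    Rnu ν (-ν - t) = (ν + t) * (2 - (ν + t)
      * (reflPrimitive (ν / 2 + 1) t / (t * reflDensity (ν / 2 + 1) t))) / ν := by
  have key := two_mul_reflPrimitive_add (p := ν / 2) (by linarith) ht
  have hg := reflDensity_pos (p := ν / 2) ht
  rw [Rnu_neg_sub hν ht, ← mul_reflDensity ht]
  generalize reflPrimitive (ν / 2) t = G, reflPrimitive (ν / 2 + 1) t = G₁,
    reflDensity (ν / 2) t = g at key hg ⊢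
  field_simp
  linear_combination t * key

lemma Rnu_neg_sub_eq_atTop (hν : 0 < ν) (ht : 0 < t) :
    Rnu ν (-ν - t) = ((ν + t) / t) ^ 2 * (reflPrimitive (ν / 2) t / reflDensity (ν / 2) t)
      - 2 * ((ν + t) / t) := by
  have key := two_mul_reflPrimitive_add (p := ν / 2) (by linarith) ht
  have hg := reflDensity_pos (p := ν / 2) ht
  rw [Rnu_neg_sub hν ht]
  generalize reflPrimitive (ν / 2) t = G, reflPrimitive (ν / 2 + 1) t = G₁,
    reflDensity (ν / 2) t = g at key hg ⊢
  field_simp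
  linear_combination -key

lemma abs_Rnu_le (hν : 0 < ν) {x : ℝ} (hx : x < -ν) : |Rnu ν x| ≤ -2 * x / ν := by
  obtain ⟨t, ht, rfl⟩ : ∃ t, 0 < t ∧ x = -ν - t := ⟨-ν - x, by linarith, by ring⟩
  have key := two_mul_reflPrimitive_add (p := ν / 2) (by linarith) ht
  have hmono := reflPrimitive_add_one_le (p := ν / 2) (by linarith) ht.le
  have hG₁ : 0 ≤ reflPrimitive (ν / 2 + 1) t :=
    integral_nonneg ht.le fun w hw ↦ reflDensity_nonneg hw.1
  have hg := reflDensity_pos (p := ν / 2) ht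
  rw [Rnu_neg_sub hν ht]
  generalize reflPrimitive (ν / 2) t = G, reflPrimitive (ν / 2 + 1) t = G₁,
    reflDensity (ν / 2) t = g at key hmono hG₁ hg ⊢
  rw [abs_of_nonneg (div_nonneg (mul_nonneg (by linarith) (by linarith)) (by positivity)),
    div_le_div_iff₀ (by positivity) hν]
  have hν' : ν * (t * G - G₁) ≤ 2 * t ^ 2 * g := by
    nlinarith [mul_nonneg (by linarith : 0 ≤ t + ν) hG₁]
  nlinarith [mul_le_mul_of_nonneg_left hν' (by linarith : 0 ≤ ν + t)]

lemma tendsto_Rnu_nhdsLT (hν : 0 < ν) : Tendsto (Rnu ν) (𝓝[<] (-ν)) (𝓝 (4 / (2 + ν))) := by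
  refine Tendsto.of_comp_sub_nhdsGT ?_
  have hS := tendsto_reflPrimitive_div_nhdsGT (p := ν / 2 + 1) (by linarith)
  have hc : Tendsto (fun t ↦ ν + t) (𝓝[>] 0) (𝓝 ν) := by
    simpa using ((continuous_const_add ν).tendsto 0).mono_left nhdsWithin_le_nhds
  have hlim := (hc.mul ((tendsto_const_nhds (x := (2 : ℝ))).sub (hc.mul hS))).div_const ν
  rw [show ν * (2 - ν * (1 / (ν / 2 + 1))) / ν = 4 / (2 + ν) by field_simp; ring] at hlim
  refine hlim.congr' ?_
  filter_upwards [self_mem_nhdsWithin] with t ht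
  exact (Rnu_neg_sub_eq_nhdsGT hν ht).symm

lemma tendsto_Rnu_atBot (hν : 0 < ν) : Tendsto (Rnu ν) atBot (𝓝 0) := by
  refine Tendsto.of_comp_sub_atTop (a := -ν) ?_
  have hρ := tendsto_reflPrimitive_div_reflDensity_atTop (p := ν / 2) (by linarith)
  have hc : Tendsto (fun t ↦ (ν + t) / t) atTop (𝓝 1) := by
    have := (tendsto_const_nhds (x := ν)).div_atTop tendsto_id |>.add_const 1
    rw [zero_add] at this
    refine this.congr' ?_
    filter_upwards [eventually_gt_atTop 0] with t ht
    simp only [id]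
    field_simp
  have hlim := ((hc.pow 2).mul hρ).sub (hc.const_mul 2)
  rw [show (1 : ℝ) ^ 2 * 2 - 2 * 1 = 0 by norm_num] at hlim
  refine hlim.congr' ?_
  filter_upwards [eventually_gt_atTop 0] with t ht
  exact (Rnu_neg_sub_eq_atTop hν ht).symm

end Rnu

/-- `R_ν` tends to `4/(2+ν)` at `-ν⁻`, to `0` at `-∞`, and is bounded on `(-∞, -ν)`. -/
theorem Rnu_limits_and_bounded (ν : ℝ) (hν : 0 < ν) :
    Tendsto (Rnu ν) (𝓝[<] (-ν)) (𝓝 (4 / (2 + ν))) ∧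
    Tendsto (Rnu ν) atBot (𝓝 0) ∧
    (∃ M : ℝ, ∀ x : ℝ, x < -ν → |Rnu ν x| ≤ M) := by
  have hbot := tendsto_Rnu_atBot hν
  refine ⟨tendsto_Rnu_nhdsLT hν, hbot, ?_⟩
  obtain ⟨x₀, hx₀⟩ := eventually_atBot.1 (hbot.abs.eventually_lt_const (by simp : |(0 : ℝ)| < 1))
  refine ⟨max 1 (-2 * x₀ / ν), fun x hx ↦ ?_⟩
  rcases le_or_gt x x₀ with hle | hgt
  · exact (hx₀ x hle).le.trans (le_max_left _ _)
  · calc |Rnu ν x| ≤ -2 * x / ν := abs_Rnu_le hν hx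
      _ ≤ -2 * x₀ / ν := div_le_div_of_nonneg_right (by linarith) hν.le
      _ ≤ _ := le_max_right _ _
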